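/- Let G be a finite simple graph, let S₁, …, S_k ⊆ V be anchor groups, let v* ∈ V, and let val* be the reduction value function. Suppose the set F of feasible subgraphs of G is nonempty. Then the maximum of Φ(H) over H ∈ F (with Φ computed with respect to val*) equals 1 divided by the minimum of |V(H)| + |E(H)| over H ∈ F; that is, OPT_OISR = 1 / OPT_GST for the constructed instance. -/

import Mathlib

open scoped BigOperators

/-- The information-density objective Φ of a subgraph `H`, given a value
function on vertices and on edges. -/
noncomputable def Phi {V : Type*} {G : SimpleGraph V} (H : G.Subgraph)
    (valV : V → ℝ) (valE : Sym2 V → ℝ) : ℝ :=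
  ((∑ᶠ v ∈ H.verts, valV v) + ∑ᶠ e ∈ H.edgeSet, valE e) /
    ((H.verts.ncard + H.edgeSet.ncard : ℕ) : ℝ)

/-- The reduction value function on vertices: `1` at `vstar`, `0` elsewhere. -/
noncomputable def redVal {V : Type*} [DecidableEq V] (vstar : V) : V → ℝ :=
  fun v => if v = vstar then 1 else 0

/-! Under `redVal vstar` with zero edge values the numerator of `Φ(H)` is `1` for every `H`
containing `vstar`, so `Φ(H) = 1 / (|V(H)| + |E(H)|)`; since `n ↦ 1 / n` is antitone on positive
sizes, a feasible subgraph of least size is one of greatest density. -/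

lemma finsum_mem_redVal {V : Type*} [DecidableEq V] {s : Set V} {vstar : V} (hv : vstar ∈ s) :
    ∑ᶠ v ∈ s, redVal vstar v = 1 := by
  rw [finsum_mem_def, finsum_eq_single _ vstar fun v hv' => by simp [redVal, hv']]
  simp [redVal, hv]

lemma Phi_redVal_zero {V : Type*} [DecidableEq V] {G : SimpleGraph V} {H : G.Subgraph}
    {vstar : V} (hv : vstar ∈ H.verts) :
    Phi H (redVal vstar) (fun _ => 0) = 1 / ((H.verts.ncard + H.edgeSet.ncard : ℕ) : ℝ) := by
  simp only [Phi, finsum_mem_redVal hv, finsum_zero, add_zero]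

lemma isGreatest_one_div_image_of_isLeast {s : Set ℕ} {m : ℕ} (hs : ∀ n ∈ s, 0 < n)
    (hm : IsLeast s m) : IsGreatest ((fun n : ℕ => 1 / (n : ℝ)) '' s) (1 / m) :=
  AntitoneOn.map_isLeast (fun a ha _ _ hab =>
    one_div_le_one_div_of_le (by exact_mod_cast hs a ha) (by exact_mod_cast hab)) hm

theorem stmt_6 {V : Type*} [Fintype V] [DecidableEq V] (G : SimpleGraph V)
    (k : ℕ) (S : Fin k → Set V) (vstar : V)
    (F : Set G.Subgraph)
    (hF : F = {H : G.Subgraph | H.Connected ∧ vstar ∈ H.verts ∧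
        ∀ i : Fin k, (H.verts ∩ S i).Nonempty})
    (hne : F.Nonempty) :
    ∃ (M : ℝ) (m : ℕ),
      IsGreatest ((fun H : G.Subgraph => Phi H (redVal vstar) (fun _ => 0)) '' F) M ∧
      IsLeast ((fun H : G.Subgraph => H.verts.ncard + H.edgeSet.ncard) '' F) m ∧
      M = 1 / (m : ℝ) := by
  set size : G.Subgraph → ℕ := fun H => H.verts.ncard + H.edgeSet.ncard
  have hvstar : ∀ H ∈ F, vstar ∈ H.verts := by
    rw [hF]
    exact fun H hH => hH.2.1
  have hsize_pos : ∀ n ∈ size '' F, 0 < n := by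
    rintro _ ⟨H, hH, rfl⟩
    have := (Set.ncard_pos H.verts.toFinite).mpr ⟨vstar, hvstar H hH⟩
    exact Nat.add_pos_left this _
  have hPhi : (fun H => Phi H (redVal vstar) (fun _ => 0)) '' F =
      (fun n : ℕ => 1 / (n : ℝ)) '' (size '' F) := by
    rw [Set.image_image]
    exact Set.image_congr fun H hH => Phi_redVal_zero (hvstar H hH)
  obtain ⟨m, hm⟩ : ∃ m, IsLeast (size '' F) m := ⟨_, isLeast_csInf (hne.image size)⟩
  exact ⟨1 / m, m, hPhi ▸ isGreatest_one_div_image_of_isLeast hsize_pos hm, hm, rfl⟩
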